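/- Let E be a complex Banach space, let 1 ≤ r < ∞ and let 1 < s ≤ r' (where r' is the conjugate exponent of r, with r' = ∞ when r = 1). Then the family (⦀·⦀_n^{(r,s)} : n ∈ ℕ) is a dual multi-norm over E; that is, each ⦀·⦀_n^{(r,s)} is a norm on E^n, ⦀·⦀_1^{(r,s)} coincides with the norm of E, and for all n ≥ 2 and x_1,…,x_n ∈ E: (A1) ⦀(x_{σ(1)},…,x_{σ(n)})⦀_n^{(r,s)} = ⦀(x_1,…,x_n)⦀_n^{(r,s)} for every permutation σ; (A2) ⦀(α_1 x_1,…,α_n x_n)⦀_n^{(r,s)} ≤ (max_i |α_i|)·⦀(x_1,…,x_n)⦀_n^{(r,s)} for α_i ∈ ℂ; (A3) ⦀(x_1,…,x_{n-1},0)⦀_n^{(r,s)} = ⦀(x_1,…,x_{n-1})⦀_{n-1}^{(r,s)}; (B4) ⦀(x_1,…,x_{n-2},x_{n-1},x_{n-1})⦀_n^{(r,s)} = ⦀(x_1,…,x_{n-2},2x_{n-1})⦀_{n-1}^{(r,s)}. -/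

import Mathlib

open MeasureTheory NormedSpace Set
open scoped ENNReal NNReal

/-- The weak `r`-summing norm of an `n`-tuple in a normed space `F`. -/
noncomputable def muP {F : Type*} [NormedAddCommGroup F] [NormedSpace ℂ F]
    (r : ℝ) {n : ℕ} (y : Fin n → F) : ℝ :=
  sSup { c : ℝ | ∃ l : StrongDual ℂ F, ‖l‖ ≤ 1 ∧ c = (∑ i, ‖l (y i)‖ ^ r) ^ (1 / r) }

/-- The `ℓ^s`-norm of a tuple of complex numbers, `s ∈ (0,∞]` (the max norm when `s = ∞`). -/
noncomputable def lsNorm (s : ℝ≥0∞) {n : ℕ} (α : Fin n → ℂ) : ℝ :=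
  if s = ⊤ then ⨆ i, ‖α i‖ else (∑ i, ‖α i‖ ^ s.toReal) ^ (1 / s.toReal)

/-- The weak `(r,s)`-dual multi-norm:
`⦀x⦀_n^{(r,s)} = inf { ∑_k ‖α_k‖_s · μ_{r,n}(y_k) }` over all representations
`x = ∑_k M_{α_k}(y_k)` (coordinatewise, `x_i = ∑_k α_{k,i} • y_{k,i}`). -/
noncomputable def dualNorm {E : Type*} [NormedAddCommGroup E] [NormedSpace ℂ E]
    (r : ℝ) (s : ℝ≥0∞) {n : ℕ} (x : Fin n → E) : ℝ :=
  sInf { c : ℝ | ∃ (N : ℕ) (α : Fin N → Fin n → ℂ) (y : Fin N → Fin n → E),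
    (∀ i, x i = ∑ k, α k i • y k i) ∧ c = ∑ k, lsNorm s (α k) * muP r (y k) }

/-!
Everything is proved on the primal side. If an additive map `L : E^n → E^m` sends every
elementary term `M_α y` to an elementary term `M_β w` with `‖β‖_s μ_r(w) ≤ C ‖α‖_s μ_r(y)`,
then `⦀L x⦀ ≤ C ⦀x⦀`, by pushing representations through `L`. Coordinatewise scaling,
restriction along an injection (a permutation, dropping the last coordinate) and appending a zero
coordinate are maps of this kind, which gives (A1)–(A3) and, together with concatenation of
representations, the norm axioms.

For (B4), merging the last two coordinates is such a contraction as well: `a u + b v = c w` with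
`c = ‖(a, b)‖_s` and `w = c⁻¹ (a u + b v)`, and `|λ w|^r ≤ |λ u|^r + |λ v|^r` for every functional
`λ`, by Hölder's inequality for the pair `(s, s')` followed by
`‖·‖_{s'} ≤ ‖·‖_r`, which holds because `r ≤ s'`. Conversely, `(x, u, u)` is the average of
`(x, 2u, 0)` and its transposition of the last two coordinates.
-/

open Finset Function

theorem Finset.sum_comp_le_sum_of_injective {ι κ M : Type*} [Fintype ι] [Fintype κ]
    [AddCommMonoid M] [PartialOrder M] [IsOrderedAddMonoid M] {f : κ → M} (hf : ∀ j, 0 ≤ f j)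
    {e : ι → κ} (he : Injective e) : ∑ i, f (e i) ≤ ∑ j, f j := by
  calc ∑ i, f (e i) = ∑ j ∈ univ.map ⟨e, he⟩, f j := by rw [sum_map]; rfl
    _ ≤ ∑ j, f j := sum_le_univ_sum_of_nonneg hf

theorem Fin.snoc_smul_snoc {M : Type*} [SMul ℂ M] {n : ℕ} (α : Fin n → ℂ) (a : ℂ)
    (y : Fin n → M) (u : M) :
    (Fin.snoc α a : Fin (n + 1) → ℂ) • (Fin.snoc y u : Fin (n + 1) → M) =
      Fin.snoc (α • y) (a • u) := by
  ext i
  induction i using Fin.lastCases <;> simp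

theorem Fin.exists_eq_snoc_snoc {α : Type*} {n : ℕ} (x : Fin (n + 2) → α) :
    ∃ (z : Fin n → α) (a b : α), x = Fin.snoc (Fin.snoc z a : Fin (n + 1) → α) b :=
  ⟨_, _, _, (Fin.snoc_init_self x).symm.trans
    (congrArg (Fin.snoc · _) (Fin.snoc_init_self _).symm)⟩

section LsNorm

variable {s : ℝ≥0∞} {m n : ℕ}

theorem lsNorm_nonneg (s : ℝ≥0∞) (α : Fin n → ℂ) : 0 ≤ lsNorm s α := by
  unfold lsNorm
  split_ifs
  · exact Real.iSup_nonneg fun i => norm_nonneg _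
  · positivity

theorem norm_le_lsNorm_top (α : Fin n → ℂ) (i : Fin n) : ‖α i‖ ≤ lsNorm ⊤ α := by
  rw [lsNorm, if_pos rfl]
  exact le_ciSup (f := fun i => ‖α i‖) (Set.finite_range _).bddAbove i

theorem lsNorm_le_lsNorm {α : Fin m → ℂ} {β : Fin n → ℂ}
    (hfin : s ≠ ⊤ → ∑ i, ‖α i‖ ^ s.toReal ≤ ∑ j, ‖β j‖ ^ s.toReal)
    (htop : s = ⊤ → ∀ i, ‖α i‖ ≤ lsNorm ⊤ β) : lsNorm s α ≤ lsNorm s β := by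
  rcases eq_or_ne s ⊤ with rfl | hs
  · rw [lsNorm, if_pos rfl]
    exact Real.iSup_le (htop rfl) (lsNorm_nonneg ⊤ β)
  · simp only [lsNorm, if_neg hs]
    exact Real.rpow_le_rpow (by positivity) (hfin hs) (by positivity)

theorem lsNorm_fin_one (hs : s ≠ 0) (α : Fin 1 → ℂ) : lsNorm s α = ‖α 0‖ := by
  unfold lsNorm
  split_ifs with h
  · exact ciSup_unique
  · rw [Fin.sum_univ_one, ← Real.rpow_mul (norm_nonneg _),
      mul_one_div_cancel (ENNReal.toReal_ne_zero.mpr ⟨hs, h⟩), Real.rpow_one]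

theorem lsNorm_comp_le {e : Fin m → Fin n} (he : Injective e) (α : Fin n → ℂ) :
    lsNorm s (α ∘ e) ≤ lsNorm s α :=
  lsNorm_le_lsNorm
    (fun _ => sum_comp_le_sum_of_injective (f := fun j => ‖α j‖ ^ s.toReal)
      (fun _ => by positivity) he)
    (fun _ i => norm_le_lsNorm_top α (e i))

theorem norm_le_lsNorm (hs : s ≠ 0) (α : Fin n → ℂ) (i : Fin n) : ‖α i‖ ≤ lsNorm s α := by
  have := lsNorm_comp_le (s := s) (fun _ _ _ => Subsingleton.elim _ _ :
    Injective fun _ : Fin 1 => i) α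
  rwa [lsNorm_fin_one hs] at this

theorem lsNorm_mul_le (hs : s ≠ 0) {γ : Fin n → ℂ} {M : ℝ} (hM : 0 ≤ M)
    (hγ : ∀ i, ‖γ i‖ ≤ M) (α : Fin n → ℂ) : lsNorm s (γ * α) ≤ M * lsNorm s α := by
  unfold lsNorm
  split_ifs with h
  · rw [Real.mul_iSup_of_nonneg hM]
    refine ciSup_mono (Set.finite_range _).bddAbove fun i => ?_
    rw [Pi.mul_apply, norm_mul]
    exact mul_le_mul_of_nonneg_right (hγ i) (norm_nonneg _)
  · have hp : s.toReal ≠ 0 := ENNReal.toReal_ne_zero.mpr ⟨hs, h⟩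
    calc (∑ i, ‖(γ * α) i‖ ^ s.toReal) ^ (1 / s.toReal)
        ≤ (∑ i, (M * ‖α i‖) ^ s.toReal) ^ (1 / s.toReal) := by
          gcongr with i
          rw [Pi.mul_apply, norm_mul]
          exact mul_le_mul_of_nonneg_right (hγ i) (norm_nonneg _)
      _ = M * (∑ i, ‖α i‖ ^ s.toReal) ^ (1 / s.toReal) := by
          simp_rw [Real.mul_rpow hM (norm_nonneg _), ← mul_sum]
          rw [Real.mul_rpow (by positivity) (by positivity), ← Real.rpow_mul hM,
            mul_one_div_cancel hp, Real.rpow_one]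

theorem lsNorm_snoc_zero_le (hs : s ≠ 0) (α : Fin n → ℂ) :
    lsNorm s (Fin.snoc α 0 : Fin (n + 1) → ℂ) ≤ lsNorm s α := by
  refine lsNorm_le_lsNorm (fun h => ?_) (fun _ i => ?_)
  · rw [Fin.sum_univ_castSucc]
    simp [Real.zero_rpow (ENNReal.toReal_ne_zero.mpr ⟨hs, h⟩)]
  · induction i using Fin.lastCases with
    | last => simpa using lsNorm_nonneg ⊤ α
    | cast i => simpa using norm_le_lsNorm_top α i

theorem lsNorm_snoc_merge_le (hs : s ≠ 0) (γ : Fin n → ℂ) (a b : ℂ) :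
    lsNorm s (Fin.snoc γ (lsNorm s ![a, b] : ℂ) : Fin (n + 1) → ℂ) ≤
      lsNorm s (Fin.snoc (Fin.snoc γ a : Fin (n + 1) → ℂ) b : Fin (n + 2) → ℂ) := by
  have hc : ‖(lsNorm s ![a, b] : ℂ)‖ = lsNorm s ![a, b] :=
    Complex.norm_of_nonneg (lsNorm_nonneg s _)
  refine lsNorm_le_lsNorm (fun h => le_of_eq ?_) (fun h i => ?_)
  · have hp : s.toReal ≠ 0 := ENNReal.toReal_ne_zero.mpr ⟨hs, h⟩
    simp only [Fin.sum_univ_castSucc, Fin.snoc_castSucc, Fin.snoc_last, hc]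
    rw [lsNorm, if_neg h, ← Real.rpow_mul (by positivity), one_div_mul_cancel hp,
      Real.rpow_one, Fin.sum_univ_two]
    simp only [Matrix.cons_val_zero, Matrix.cons_val_one]
    ring
  · subst h
    induction i using Fin.lastCases with
    | last =>
      rw [Fin.snoc_last, hc, lsNorm, if_pos rfl]
      refine Real.iSup_le (fun j => ?_) (lsNorm_nonneg ⊤ _)
      fin_cases j
      · simpa using norm_le_lsNorm_top (Fin.snoc (Fin.snoc γ a : Fin (n + 1) → ℂ) b)
          (Fin.last n).castSucc
      · simpa using norm_le_lsNorm_top (Fin.snoc (Fin.snoc γ a : Fin (n + 1) → ℂ) b)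
          (Fin.last (n + 1))
    | cast i =>
      simpa using norm_le_lsNorm_top (Fin.snoc (Fin.snoc γ a : Fin (n + 1) → ℂ) b)
          i.castSucc.castSucc

theorem one_le_inv_toReal_add_inv {r : ℝ} (hr : 0 < r) (hs : s ≠ 0)
    (hsr : 1 ≤ s⁻¹ + (ENNReal.ofReal r)⁻¹) : 1 ≤ s.toReal⁻¹ + r⁻¹ := by
  have h1 : s⁻¹ ≠ ⊤ := ENNReal.inv_ne_top.2 hs
  have h2 : (ENNReal.ofReal r)⁻¹ ≠ ⊤ := ENNReal.inv_ne_top.2 (ENNReal.ofReal_pos.2 hr).ne'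
  have := ENNReal.toReal_mono (ENNReal.add_ne_top.2 ⟨h1, h2⟩) hsr
  rwa [ENNReal.toReal_add h1 h2, ENNReal.toReal_inv, ENNReal.toReal_inv,
    ENNReal.toReal_ofReal hr.le, ENNReal.toReal_one] at this

theorem norm_mul_add_norm_mul_le {r : ℝ} (hr : 0 < r) (hs : 1 < s)
    (hsr : 1 ≤ s⁻¹ + (ENNReal.ofReal r)⁻¹) (a b : ℂ) {p q : ℝ} (hp : 0 ≤ p) (hq : 0 ≤ q) :
    ‖a‖ * p + ‖b‖ * q ≤ lsNorm s ![a, b] * (p ^ r + q ^ r) ^ (1 / r) := by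
  have hsr' := one_le_inv_toReal_add_inv hr (zero_lt_one.trans hs).ne' hsr
  rcases eq_or_ne s ⊤ with rfl | hst
  · have hr1 : r ≤ 1 := by simpa [inv_le_one₀ hr, one_le_inv₀ hr] using hsr'
    calc ‖a‖ * p + ‖b‖ * q
        ≤ lsNorm ⊤ ![a, b] * (p ^ (1 : ℝ) + q ^ (1 : ℝ)) ^ (1 / (1 : ℝ)) := by
          simp only [Real.rpow_one, div_one, mul_add]
          gcongr
          · simpa using norm_le_lsNorm_top ![a, b] 0
          · simpa using norm_le_lsNorm_top ![a, b] 1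
      _ ≤ lsNorm ⊤ ![a, b] * (p ^ r + q ^ r) ^ (1 / r) := by
          gcongr
          · exact lsNorm_nonneg _ _
          · exact Real.rpow_add_rpow_le hp hq hr hr1
  · have hσ : 1 < s.toReal := by
      simpa using (ENNReal.toReal_lt_toReal ENNReal.one_ne_top hst).2 hs
    have hpq := Real.HolderConjugate.conjExponent hσ
    have hrt : r ≤ s.toReal.conjExponent := by
      have := hpq.inv_add_inv_eq_one
      rw [← inv_le_inv₀ hpq.symm.pos hr]
      linarith
    have holder :=
      Real.inner_le_Lp_mul_Lq_of_nonneg univ hpq (f := ![‖a‖, ‖b‖]) (g := ![p, q])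
      (fun i _ => by fin_cases i <;> simp) (fun i _ => by fin_cases i <;> simp [hp, hq])
    simp only [Fin.sum_univ_two, Matrix.cons_val_zero, Matrix.cons_val_one] at holder
    calc ‖a‖ * p + ‖b‖ * q
        ≤ lsNorm s ![a, b] * (p ^ s.toReal.conjExponent + q ^ s.toReal.conjExponent) ^
            (1 / s.toReal.conjExponent) := by
          simpa [lsNorm, hst, Fin.sum_univ_two] using holder
      _ ≤ lsNorm s ![a, b] * (p ^ r + q ^ r) ^ (1 / r) := by
          gcongr
          · exact lsNorm_nonneg _ _
          · exact Real.rpow_add_rpow_le hp hq hr hrt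

theorem norm_inv_lsNorm_mul_rpow_le {r : ℝ} (hr : 0 < r) (hs : 1 < s)
    (hsr : 1 ≤ s⁻¹ + (ENNReal.ofReal r)⁻¹) (a b p q : ℂ) :
    ‖(lsNorm s ![a, b] : ℂ)⁻¹ * (a * p + b * q)‖ ^ r ≤ ‖p‖ ^ r + ‖q‖ ^ r := by
  have hnorm :
      ‖(lsNorm s ![a, b] : ℂ)⁻¹ * (a * p + b * q)‖ ≤ (‖p‖ ^ r + ‖q‖ ^ r) ^ (1 / r) := by
    rw [norm_mul, norm_inv, Complex.norm_of_nonneg (lsNorm_nonneg s _)]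
    rcases eq_or_ne (lsNorm s ![a, b]) 0 with hc | hc
    · rw [hc, inv_zero, zero_mul]
      positivity
    · rw [inv_mul_le_iff₀ ((lsNorm_nonneg s _).lt_of_ne' hc)]
      refine (norm_add_le _ _).trans ?_
      simpa only [norm_mul] using
        norm_mul_add_norm_mul_le hr hs hsr a b (norm_nonneg p) (norm_nonneg q)
  calc ‖(lsNorm s ![a, b] : ℂ)⁻¹ * (a * p + b * q)‖ ^ r
      ≤ ((‖p‖ ^ r + ‖q‖ ^ r) ^ (1 / r)) ^ r := by gcongr
    _ = ‖p‖ ^ r + ‖q‖ ^ r := by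
      rw [one_div, Real.rpow_inv_rpow (by positivity) hr.ne']

end LsNorm

section MuP

variable {E : Type*} [NormedAddCommGroup E] [NormedSpace ℂ E] {r : ℝ} {m n : ℕ}

theorem muP_nonneg (r : ℝ) (y : Fin n → E) : 0 ≤ muP r y :=
  Real.sSup_nonneg (by rintro _ ⟨l, -, rfl⟩; positivity)

theorem le_muP (hr : 0 < r) (y : Fin n → E) {l : StrongDual ℂ E} (hl : ‖l‖ ≤ 1) :
    (∑ i, ‖l (y i)‖ ^ r) ^ (1 / r) ≤ muP r y := by
  refine le_csSup ⟨(∑ i, ‖y i‖ ^ r) ^ (1 / r), ?_⟩ ⟨l, hl, rfl⟩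
  rintro _ ⟨l', hl', rfl⟩
  gcongr with i
  exact (l'.le_of_opNorm_le hl' (y i)).trans_eq (one_mul _)

theorem muP_le {y : Fin n → E} {B : ℝ}
    (h : ∀ l : StrongDual ℂ E, ‖l‖ ≤ 1 → (∑ i, ‖l (y i)‖ ^ r) ^ (1 / r) ≤ B) : muP r y ≤ B :=
  csSup_le ⟨_, 0, by simp, rfl⟩ (by rintro _ ⟨l, hl, rfl⟩; exact h l hl)

theorem muP_le_muP (hr : 0 < r) {y' : Fin m → E} {y : Fin n → E}
    (h : ∀ l : StrongDual ℂ E, ‖l‖ ≤ 1 → ∑ i, ‖l (y' i)‖ ^ r ≤ ∑ i, ‖l (y i)‖ ^ r) :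
    muP r y' ≤ muP r y :=
  muP_le fun l hl =>
    (Real.rpow_le_rpow (by positivity) (h l hl) (by positivity)).trans (le_muP hr y hl)

theorem muP_fin_one (hr : 0 < r) (y : Fin 1 → E) : muP r y = ‖y 0‖ := by
  refine le_antisymm (muP_le fun l hl => ?_) ?_
  · rw [Fin.sum_univ_one, one_div, Real.rpow_rpow_inv (norm_nonneg _) hr.ne']
    exact (l.le_of_opNorm_le hl _).trans_eq (one_mul _)
  · obtain ⟨g, hg, hgy⟩ := exists_dual_vector'' ℂ (y 0)
    have := le_muP hr y hg
    rwa [Fin.sum_univ_one, one_div, Real.rpow_rpow_inv (norm_nonneg _) hr.ne', hgy,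
      RCLike.norm_ofReal, abs_norm] at this

theorem muP_comp_le (hr : 0 < r) {e : Fin m → Fin n} (he : Injective e) (y : Fin n → E) :
    muP r (y ∘ e) ≤ muP r y :=
  muP_le_muP hr fun l _ =>
    sum_comp_le_sum_of_injective (f := fun j => ‖l (y j)‖ ^ r) (fun _ => by positivity) he

theorem muP_snoc_zero_le (hr : 0 < r) (y : Fin n → E) :
    muP r (Fin.snoc y 0 : Fin (n + 1) → E) ≤ muP r y :=
  muP_le_muP hr fun l _ => by simp [Fin.sum_univ_castSucc, Real.zero_rpow hr.ne']

theorem muP_snoc_merge_le (hr : 0 < r) (z : Fin n → E) {u v w : E}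
    (h : ∀ l : StrongDual ℂ E, ‖l w‖ ^ r ≤ ‖l u‖ ^ r + ‖l v‖ ^ r) :
    muP r (Fin.snoc z w : Fin (n + 1) → E) ≤
      muP r (Fin.snoc (Fin.snoc z u : Fin (n + 1) → E) v : Fin (n + 2) → E) :=
  muP_le_muP hr fun l _ => by
    simp only [Fin.sum_univ_castSucc, Fin.snoc_castSucc, Fin.snoc_last]
    linarith [h l]

end MuP

section DualNorm

variable {E : Type*} [NormedAddCommGroup E] [NormedSpace ℂ E] {r : ℝ} {s : ℝ≥0∞} {m n : ℕ}

theorem lsNorm_mul_muP_nonneg (α : Fin n → ℂ) (y : Fin n → E) : 0 ≤ lsNorm s α * muP r y :=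
  mul_nonneg (lsNorm_nonneg s α) (muP_nonneg r y)

theorem le_mul_dualNorm {a C : ℝ} (hC : 0 ≤ C) {x : Fin n → E}
    (h : ∀ (N : ℕ) (α : Fin N → Fin n → ℂ) (y : Fin N → Fin n → E), x = ∑ k, α k • y k →
      a ≤ C * ∑ k, lsNorm s (α k) * muP r (y k)) :
    a ≤ C * dualNorm r s x := by
  rw [dualNorm, ← smul_eq_mul, ← Real.sInf_smul_of_nonneg hC]
  refine le_csInf
    (Set.Nonempty.smul_set ⟨_, 1, fun _ => 1, fun _ => x, fun i => by simp, rfl⟩) ?_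
  rintro _ ⟨_, ⟨N, α, y, hx, rfl⟩, rfl⟩
  exact h N α y (funext fun i => by simp [hx i])

theorem dualNorm_le_sum {N : ℕ} (α : Fin N → Fin n → ℂ) (y : Fin N → Fin n → E) :
    dualNorm r s (∑ k, α k • y k) ≤ ∑ k, lsNorm s (α k) * muP r (y k) :=
  csInf_le ⟨0, by
      rintro _ ⟨N, α, y, -, rfl⟩
      exact sum_nonneg fun k _ => lsNorm_mul_muP_nonneg (α k) (y k)⟩
    ⟨N, α, y, fun i => by simp, rfl⟩

theorem dualNorm_nonneg (x : Fin n → E) : 0 ≤ dualNorm r s x :=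
  Real.sInf_nonneg <| by
    rintro _ ⟨N, α, y, -, rfl⟩
    exact sum_nonneg fun k _ => lsNorm_mul_muP_nonneg (α k) (y k)

theorem dualNorm_zero : dualNorm r s (0 : Fin n → E) = 0 :=
  le_antisymm
    (by simpa using dualNorm_le_sum (r := r) (s := s) (E := E) (n := n) Fin.elim0 Fin.elim0)
    (dualNorm_nonneg 0)

theorem dualNorm_add_le (x y : Fin n → E) :
    dualNorm r s (x + y) ≤ dualNorm r s x + dualNorm r s y := by
  have key : ∀ (N₁ : ℕ) (α₁ : Fin N₁ → Fin n → ℂ) (y₁ : Fin N₁ → Fin n → E)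
      (N₂ : ℕ) (α₂ : Fin N₂ → Fin n → ℂ) (y₂ : Fin N₂ → Fin n → E),
      dualNorm r s (∑ k, α₁ k • y₁ k + ∑ k, α₂ k • y₂ k) ≤
        ∑ k, lsNorm s (α₁ k) * muP r (y₁ k) + ∑ k, lsNorm s (α₂ k) * muP r (y₂ k) := by
    intro N₁ α₁ y₁ N₂ α₂ y₂
    simpa only [Fin.sum_univ_add, Fin.append_left, Fin.append_right] using
      dualNorm_le_sum (r := r) (s := s) (Fin.append α₁ α₂) (Fin.append y₁ y₂)
  have h : dualNorm r s (x + y) - dualNorm r s y ≤ 1 * dualNorm r s x :=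
    le_mul_dualNorm zero_le_one fun N₁ α₁ y₁ hx => by
      have : dualNorm r s (x + y) - ∑ k, lsNorm s (α₁ k) * muP r (y₁ k) ≤ 1 * dualNorm r s y :=
        le_mul_dualNorm zero_le_one fun N₂ α₂ y₂ hy => by
          subst hx hy
          linarith [key N₁ α₁ y₁ N₂ α₂ y₂]
      linarith
  linarith

theorem dualNorm_map_le (L : (Fin n → E) →+ (Fin m → E)) {C : ℝ} (hC : 0 ≤ C)
    (hL : ∀ (α : Fin n → ℂ) (y : Fin n → E), ∃ (β : Fin m → ℂ) (w : Fin m → E),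
      L (α • y) = β • w ∧ lsNorm s β * muP r w ≤ C * (lsNorm s α * muP r y))
    (x : Fin n → E) : dualNorm r s (L x) ≤ C * dualNorm r s x := by
  choose β w hLβ hcost using hL
  refine le_mul_dualNorm hC fun N α y hx => ?_
  calc dualNorm r s (L x) = dualNorm r s (∑ k, β (α k) (y k) • w (α k) (y k)) := by
        simp only [hx, map_sum, hLβ]
    _ ≤ ∑ k, lsNorm s (β (α k) (y k)) * muP r (w (α k) (y k)) := dualNorm_le_sum _ _
    _ ≤ C * ∑ k, lsNorm s (α k) * muP r (y k) := by
        rw [mul_sum]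
        exact sum_le_sum fun k _ => hcost _ _

theorem dualNorm_map_le_of_le (L : (Fin n → E) →+ (Fin m → E))
    (hL : ∀ (α : Fin n → ℂ) (y : Fin n → E), ∃ (β : Fin m → ℂ) (w : Fin m → E),
      L (α • y) = β • w ∧ lsNorm s β ≤ lsNorm s α ∧ muP r w ≤ muP r y)
    (x : Fin n → E) : dualNorm r s (L x) ≤ dualNorm r s x := by
  refine (dualNorm_map_le L zero_le_one (fun α y => ?_) x).trans_eq (one_mul _)
  obtain ⟨β, w, hLβ, hβ, hw⟩ := hL α y
  refine ⟨β, w, hLβ, ?_⟩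
  rw [one_mul]
  exact mul_le_mul hβ hw (muP_nonneg r w) (lsNorm_nonneg s α)

theorem dualNorm_smul_le (hs : s ≠ 0) {γ : Fin n → ℂ} {M : ℝ} (hM : 0 ≤ M)
    (hγ : ∀ i, ‖γ i‖ ≤ M) (x : Fin n → E) : dualNorm r s (γ • x) ≤ M * dualNorm r s x :=
  dualNorm_map_le (DistribSMul.toAddMonoidHom _ γ) hM
    (fun α y => ⟨γ * α, y, (mul_smul γ α y).symm, by
      rw [← mul_assoc]
      exact mul_le_mul_of_nonneg_right (lsNorm_mul_le hs hM hγ α) (muP_nonneg r y)⟩) x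

theorem dualNorm_const_smul (hs : s ≠ 0) (c : ℂ) (x : Fin n → E) :
    dualNorm r s (c • x) = ‖c‖ * dualNorm r s x := by
  rcases eq_or_ne c 0 with rfl | hc
  · simp [dualNorm_zero]
  refine le_antisymm
    (dualNorm_smul_le (γ := fun _ => c) hs (norm_nonneg c) (fun _ => le_rfl) x) ?_
  have h := dualNorm_smul_le (r := r) (γ := fun _ => c⁻¹) hs (norm_nonneg c⁻¹)
    (fun _ => le_rfl) (c • x)
  rw [show (fun _ => c⁻¹) • c • x = x from inv_smul_smul₀ hc x, norm_inv] at h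
  calc ‖c‖ * dualNorm r s x ≤ ‖c‖ * (‖c‖⁻¹ * dualNorm r s (c • x)) := by gcongr
    _ = dualNorm r s (c • x) := mul_inv_cancel_left₀ (norm_ne_zero_iff.2 hc) _

theorem dualNorm_comp_le (hr : 0 < r) {e : Fin m → Fin n} (he : Injective e) (x : Fin n → E) :
    dualNorm r s (x ∘ e) ≤ dualNorm r s x :=
  dualNorm_map_le_of_le (LinearMap.funLeft ℂ E e).toAddMonoidHom
    (fun α y => ⟨α ∘ e, y ∘ e, rfl, lsNorm_comp_le he α, muP_comp_le hr he y⟩) x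

theorem dualNorm_comp_perm (hr : 0 < r) (σ : Equiv.Perm (Fin n)) (x : Fin n → E) :
    dualNorm r s (x ∘ σ) = dualNorm r s x := by
  refine le_antisymm (dualNorm_comp_le hr σ.injective x) ?_
  simpa [Function.comp_def] using dualNorm_comp_le (s := s) hr σ.symm.injective (x ∘ σ)

theorem dualNorm_fin_one (hr : 0 < r) (hs : s ≠ 0) (x : Fin 1 → E) :
    dualNorm r s x = ‖x 0‖ := by
  refine le_antisymm ?_
    ((le_mul_dualNorm zero_le_one fun N α y hx => ?_).trans_eq (one_mul _))
  · simpa [lsNorm_fin_one hs, muP_fin_one hr] using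
      dualNorm_le_sum (r := r) (s := s) (fun _ : Fin 1 => (1 : Fin 1 → ℂ)) (fun _ => x)
  · rw [hx, one_mul]
    simp only [Finset.sum_apply, Pi.smul_apply', lsNorm_fin_one hs, muP_fin_one hr]
    exact (norm_sum_le _ _).trans_eq (sum_congr rfl fun k _ => norm_smul _ _)

theorem norm_le_dualNorm (hr : 0 < r) (hs : s ≠ 0) (x : Fin n → E) (i : Fin n) :
    ‖x i‖ ≤ dualNorm r s x := by
  have := dualNorm_comp_le (s := s) hr (fun _ _ _ => Subsingleton.elim _ _ :
    Injective fun _ : Fin 1 => i) x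
  rwa [dualNorm_fin_one hr hs] at this

theorem dualNorm_eq_zero_iff (hr : 0 < r) (hs : s ≠ 0) {x : Fin n → E} :
    dualNorm r s x = 0 ↔ x = 0 := by
  refine ⟨fun h => funext fun i => norm_le_zero_iff.1 (h ▸ norm_le_dualNorm hr hs x i), ?_⟩
  rintro rfl
  exact dualNorm_zero

theorem dualNorm_snoc_zero_le (hr : 0 < r) (hs : s ≠ 0) (x : Fin n → E) :
    dualNorm r s (Fin.snoc x 0 : Fin (n + 1) → E) ≤ dualNorm r s x := by
  let L : (Fin n → E) →+ (Fin (n + 1) → E) :=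
    AddMonoidHom.mk' (fun x => Fin.snoc x 0) fun x y => by
      ext i
      induction i using Fin.lastCases <;> simp
  exact dualNorm_map_le_of_le L (fun α y => ⟨Fin.snoc α 0, Fin.snoc y 0,
    by simp [L, Fin.snoc_smul_snoc], lsNorm_snoc_zero_le hs α, muP_snoc_zero_le hr y⟩) x

theorem dualNorm_snoc_zero (hr : 0 < r) (hs : s ≠ 0) (x : Fin n → E) :
    dualNorm r s (Fin.snoc x 0 : Fin (n + 1) → E) = dualNorm r s x := by
  refine le_antisymm (dualNorm_snoc_zero_le hr hs x) ?_
  simpa using dualNorm_comp_le (s := s) hr (Fin.castSucc_injective n) (Fin.snoc x 0)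

theorem dualNorm_snoc_merge_le (hr : 0 < r) (hs : 1 < s)
    (hsr : 1 ≤ s⁻¹ + (ENNReal.ofReal r)⁻¹) (z : Fin n → E) (u v : E) :
    dualNorm r s (Fin.snoc z (u + v) : Fin (n + 1) → E) ≤
      dualNorm r s (Fin.snoc (Fin.snoc z u : Fin (n + 1) → E) v : Fin (n + 2) → E) := by
  have hs0 : s ≠ 0 := (zero_lt_one.trans hs).ne'
  let L : (Fin (n + 2) → E) →+ (Fin (n + 1) → E) :=
    AddMonoidHom.mk' (fun X => Fin.snoc (fun i => X i.castSucc.castSucc)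
        (X (Fin.last n).castSucc + X (Fin.last _))) fun X Y => by
        ext i
        induction i using Fin.lastCases
        · simp only [Fin.snoc_last, Pi.add_apply]
          abel
        · simp
  have hL : ∀ (z : Fin n → E) (u v : E),
      L (Fin.snoc (Fin.snoc z u : Fin (n + 1) → E) v) = Fin.snoc z (u + v) := by
    intro z u v
    simp [L]
  rw [← hL]
  refine dualNorm_map_le_of_le L (fun α y => ?_) _
  obtain ⟨γ, a, b, rfl⟩ := Fin.exists_eq_snoc_snoc α
  obtain ⟨z, u, v, rfl⟩ := Fin.exists_eq_snoc_snoc y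
  refine ⟨Fin.snoc γ (lsNorm s ![a, b] : ℂ),
    Fin.snoc z ((lsNorm s ![a, b] : ℂ)⁻¹ • (a • u + b • v)), ?_,
    lsNorm_snoc_merge_le hs0 γ a b, muP_snoc_merge_le hr z fun l => ?_⟩
  · rw [Fin.snoc_smul_snoc, Fin.snoc_smul_snoc, hL, Fin.snoc_smul_snoc]
    congr 1
    rcases eq_or_ne (lsNorm s ![a, b]) 0 with hc | hc
    · have ha := norm_le_lsNorm hs0 ![a, b] 0
      have hb := norm_le_lsNorm hs0 ![a, b] 1
      simp_all
    · rw [smul_inv_smul₀ (Complex.ofReal_ne_zero.2 hc)]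
  · simpa only [map_smul, map_add, smul_eq_mul] using
      norm_inv_lsNorm_mul_rpow_le hr hs hsr a b (l u) (l v)

theorem dualNorm_snoc_snoc_self_le (hr : 0 < r) (hs : s ≠ 0) (z : Fin n → E) (u : E) :
    dualNorm r s (Fin.snoc (Fin.snoc z u : Fin (n + 1) → E) u : Fin (n + 2) → E) ≤
      dualNorm r s (Fin.snoc z (u + u) : Fin (n + 1) → E) := by
  set X : Fin (n + 2) → E := Fin.snoc (Fin.snoc z (u + u) : Fin (n + 1) → E) 0
  set σ := Equiv.swap (Fin.last n).castSucc (Fin.last (n + 1))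
  have hX : (Fin.snoc (Fin.snoc z u : Fin (n + 1) → E) u : Fin (n + 2) → E) =
      (2 : ℂ)⁻¹ • X + (2 : ℂ)⁻¹ • (X ∘ σ) := by
    have half (v : E) : (2 : ℂ)⁻¹ • (v + v) = v := by
      rw [← two_smul ℂ v, inv_smul_smul₀ two_ne_zero]
    ext i
    induction i using Fin.lastCases with
    | last => simp [X, σ, half]
    | cast i =>
      induction i using Fin.lastCases with
      | last => simp [X, σ, half]
      | cast i =>
        simp [X, σ, Equiv.swap_apply_of_ne_of_ne, ← smul_add, half]
  calc _ ≤ dualNorm r s ((2 : ℂ)⁻¹ • X) + dualNorm r s ((2 : ℂ)⁻¹ • (X ∘ σ)) :=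
        hX ▸ dualNorm_add_le _ _
    _ = dualNorm r s X := by
        rw [dualNorm_const_smul hs, dualNorm_const_smul hs, dualNorm_comp_perm hr]
        norm_num
        ring
    _ = _ := dualNorm_snoc_zero hr hs _

end DualNorm

theorem stmt3_general (r : ℝ) (s : ℝ≥0∞) (hr : 1 ≤ r) (hs : 1 < s)
    (hsr : 1 ≤ s⁻¹ + (ENNReal.ofReal r)⁻¹)
    (E : Type*) [NormedAddCommGroup E] [NormedSpace ℂ E] :
    -- each `⦀·⦀_n^{(r,s)}` is a norm on `E^n`:
    (∀ (n : ℕ) (x : Fin n → E), dualNorm r s x = 0 ↔ x = 0) ∧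
    (∀ (n : ℕ) (x y : Fin n → E), dualNorm r s (x + y) ≤ dualNorm r s x + dualNorm r s y) ∧
    (∀ (n : ℕ) (c : ℂ) (x : Fin n → E), dualNorm r s (c • x) = ‖c‖ * dualNorm r s x) ∧
    -- `⦀·⦀_1^{(r,s)}` is the norm of `E`:
    (∀ x : E, dualNorm r s (fun _ : Fin 1 => x) = ‖x‖) ∧
    -- (A1):
    (∀ (n : ℕ) (σ : Equiv.Perm (Fin n)) (x : Fin n → E),
      dualNorm r s (x ∘ σ) = dualNorm r s x) ∧
    -- (A2):
    (∀ (n : ℕ) (α : Fin (n + 1) → ℂ) (x : Fin (n + 1) → E),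
      dualNorm r s (fun i => α i • x i) ≤ (⨆ i, ‖α i‖) * dualNorm r s x) ∧
    -- (A3):
    (∀ (n : ℕ) (x : Fin (n + 1) → E),
      dualNorm r s (Fin.snoc x (0 : E)) = dualNorm r s x) ∧
    -- (B4):
    (∀ (n : ℕ) (x : Fin (n + 1) → E),
      dualNorm r s (Fin.snoc x (x (Fin.last n))) =
        dualNorm r s (Function.update x (Fin.last n) ((2 : ℂ) • x (Fin.last n)))) := by
  have hr0 : 0 < r := zero_lt_one.trans_le hr
  have hs0 : s ≠ 0 := (zero_lt_one.trans hs).ne'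
  refine ⟨fun n x => dualNorm_eq_zero_iff hr0 hs0, fun n x y => dualNorm_add_le x y,
    fun n c x => dualNorm_const_smul hs0 c x, fun x => dualNorm_fin_one hr0 hs0 _,
    fun n σ x => dualNorm_comp_perm hr0 σ x,
    fun n α x => dualNorm_smul_le hs0 (Real.iSup_nonneg fun i => norm_nonneg (α i))
      (le_ciSup (f := fun i => ‖α i‖) (Set.finite_range _).bddAbove) x,
    fun n x => dualNorm_snoc_zero hr0 hs0 x, fun n x => ?_⟩
  obtain ⟨z, u, rfl⟩ : ∃ z u, x = Fin.snoc z u := ⟨_, _, (Fin.snoc_init_self x).symm⟩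
  rw [Fin.snoc_last, Fin.update_snoc_last, two_smul]
  exact le_antisymm (dualNorm_snoc_snoc_self_le hr0 hs0 z u)
    (dualNorm_snoc_merge_le hr0 hs hsr z u u)

/-- for `1 ≤ r < ∞` and `1 < s ≤ r'` (conjugate exponent, `r' = ∞` when `r = 1`;
the condition `s ≤ r'` is encoded as `1 ≤ 1/s + 1/r` in `ℝ≥0∞`), the family
`(⦀·⦀_n^{(r,s)})_n` is a dual multi-norm over `E`: each level is a norm on `E^n`, level `1`
is the norm of `E`, and axioms (A1), (A2), (A3) and (B4) hold. -/
theorem stmt3 (r : ℝ) (s : ℝ≥0∞) (hr : 1 ≤ r) (hs : 1 < s)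
    (hsr : 1 ≤ s⁻¹ + (ENNReal.ofReal r)⁻¹)
    (E : Type*) [NormedAddCommGroup E] [NormedSpace ℂ E] [CompleteSpace E] :
    -- each `⦀·⦀_n^{(r,s)}` is a norm on `E^n`:
    (∀ (n : ℕ) (x : Fin n → E), dualNorm r s x = 0 ↔ x = 0) ∧
    (∀ (n : ℕ) (x y : Fin n → E), dualNorm r s (x + y) ≤ dualNorm r s x + dualNorm r s y) ∧
    (∀ (n : ℕ) (c : ℂ) (x : Fin n → E), dualNorm r s (c • x) = ‖c‖ * dualNorm r s x) ∧
    -- `⦀·⦀_1^{(r,s)}` is the norm of `E`: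
    (∀ x : E, dualNorm r s (fun _ : Fin 1 => x) = ‖x‖) ∧
    -- (A1):
    (∀ (n : ℕ) (σ : Equiv.Perm (Fin n)) (x : Fin n → E),
      dualNorm r s (x ∘ σ) = dualNorm r s x) ∧
    -- (A2):
    (∀ (n : ℕ) (α : Fin (n + 1) → ℂ) (x : Fin (n + 1) → E),
      dualNorm r s (fun i => α i • x i) ≤ (⨆ i, ‖α i‖) * dualNorm r s x) ∧
    -- (A3):
    (∀ (n : ℕ) (x : Fin (n + 1) → E),
      dualNorm r s (Fin.snoc x (0 : E)) = dualNorm r s x) ∧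
    -- (B4):
    (∀ (n : ℕ) (x : Fin (n + 1) → E),
      dualNorm r s (Fin.snoc x (x (Fin.last n))) =
        dualNorm r s (Function.update x (Fin.last n) ((2 : ℂ) • x (Fin.last n)))) :=
  stmt3_general r s hr hs hsr E
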